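/- arXiv:math/0009036 — 4 statements merged into one kernel-verified Lean document; each statement's English description precedes it below -/
import Mathlib

section
/- Zagier's identity: in the ring of formal power series in q with integer coefficients, Σ_{n=0}^∞ [(q)_∞ − (q)_n] = (q)_∞ · Σ_{k=1}^∞ q^k/(1 − q^k) + Σ_{r=1}^∞ (−1)^r [(3r−1) q^{r(3r−1)/2} + 3r q^{r(3r+1)/2}]. (Both infinite sums are well defined as formal power series: the coefficient of q^N in (q)_∞ − (q)_n vanishes for n ≥ N, and each power of q receives only finitely many contributions on the right.) -/
open PowerSeries Finset

/-- The finite product `(q)_n = ∏_{k=1}^n (1 - q^k)` in `ℤ⟦q⟧`. -/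
noncomputable def qPoch (n : ℕ) : PowerSeries ℤ :=
  ∏ k ∈ Finset.range n, (1 - (PowerSeries.X : PowerSeries ℤ) ^ (k + 1))

/-- The infinite product `(q)_∞ = ∏_{k=1}^∞ (1 - q^k)`: its coefficient of `q^N`
is determined by the finite product `∏_{k=1}^N (1 - q^k)`. -/
noncomputable def eulerProd : PowerSeries ℤ :=
  PowerSeries.mk fun N => PowerSeries.coeff N (qPoch N)

/-- For `k ≥ 1`, the series `q^k/(1 - q^k) = Σ_{j=1}^∞ q^{jk}`: its coefficient of
`q^N` is `1` exactly when `N` is a positive multiple of `k`. -/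
noncomputable def geomSeries (k : ℕ) : PowerSeries ℤ :=
  PowerSeries.mk fun N => if k ∣ N ∧ N ≠ 0 then 1 else 0

/-- The series `Σ_{k=1}^∞ q^k/(1 - q^k)`, defined coefficient-wise: only the terms
with `k ≤ N` contribute to the coefficient of `q^N`. -/
noncomputable def lambertSum : PowerSeries ℤ :=
  PowerSeries.mk fun N => ∑ k ∈ Finset.Icc 1 N, PowerSeries.coeff N (geomSeries k)

/-- The series `Σ_{n=0}^∞ [(q)_∞ - (q)_n]`, defined coefficient-wise: the coefficient
of `q^N` in `(q)_∞ - (q)_n` vanishes for `n ≥ N`. -/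
noncomputable def zagierLHS : PowerSeries ℤ :=
  PowerSeries.mk fun N =>
    ∑ n ∈ Finset.range N, PowerSeries.coeff N (eulerProd - qPoch n)

/-- The series `Σ_{r=1}^∞ (-1)^r [(3r-1) q^{r(3r-1)/2} + 3r q^{r(3r+1)/2}]`, defined
coefficient-wise: only the terms with `r ≤ N` contribute to the coefficient of `q^N`. -/
noncomputable def pentagonalDerivSeries : PowerSeries ℤ :=
  PowerSeries.mk fun N => ∑ r ∈ Finset.Icc 1 N, (-1 : ℤ) ^ r *
    ((if 2 * N = 3 * r * r - r then 3 * (r : ℤ) - 1 else 0) +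
     (if 2 * N = 3 * r * r + r then 3 * (r : ℤ) else 0))

/-!
Deform the Euler product by a second variable `t`, writing
`(t x^{k+1}; x)_n = ∏_{i<n} (1 - t x^{k+i+1})`. A telescoping sum shows that
`A_k(t) = Σ_n t^n x^{(k+1)n} (t x^{k+1}; x)_{n+1}` satisfies
`A_k + t³ x^{3k+5} A_{k+1} = 1 - t² x^{2k+3}`, and iterating this gives the `t`-pentagonal theorem
`W(t) := Σ_m t^{m+2} x^{m+1} (t x; x)_m
  = Σ_{r≥1} (-1)^{r+1} (t^{3r-1} x^{r(3r-1)/2} + t^{3r} x^{r(3r+1)/2})`.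

Zagier's identity is the derivative of this at `t = 1`, where the right side gives the pentagonal
part. On the left, `1 - (t x; x)_M = Σ_m t x^{m+1} (t x; x)_m`; as `t - t^{m+2}` vanishes at
`t = 1`, the derivative of `1 - (t x; x)_M - W(t)` is `-Σ_m (m+1) x^{m+1} (x)_m`, which is
`Σ_n ((x)_M - (x)_n)`, while that of `1 - (t x; x)_M` is `(x)_M Σ_k x^k/(1 - x^k)`.

The derivative at `t = 1` is the `ε`-part of the value at `t = 1 + ε` in the dual numbers over
`ℤ⟦X⟧`. All sums are truncated; the errors are divisible by `X^(N+1)`, so they do not affect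
the coefficient of `X^N`.
-/

lemma two_mul_pentagonal_natCast (r : ℕ) : 2 * pentagonal r = 3 * r * r - r := by
  have hr : r ≤ 3 * r * r := by nlinarith [Nat.le_mul_self r]
  zify [hr]
  linear_combination two_mul_natCast_pentagonal r

lemma two_mul_pentagonal_neg_natCast (r : ℕ) : 2 * pentagonal (-r) = 3 * r * r + r := by
  zify
  linear_combination two_mul_natCast_pentagonal_neg r

lemma pentagonal_neg_natCast_succ (r : ℕ) :
    pentagonal (-(r + 1 : ℕ)) = pentagonal (-r) + (3 * r + 2) := by
  have h₁ := two_mul_pentagonal_neg_natCast (r + 1)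
  have h₂ := two_mul_pentagonal_neg_natCast r
  ring_nf at h₁ h₂ ⊢
  omega

lemma pentagonal_neg_natCast_add (r : ℕ) :
    pentagonal (-r) + (2 * r + 1) = pentagonal (r + 1 : ℕ) := by
  have h₁ := two_mul_pentagonal_natCast (r + 1)
  have h₂ := two_mul_pentagonal_neg_natCast r
  ring_nf at h₁ h₂ ⊢
  omega

lemma le_pentagonal_natCast (r : ℕ) : r ≤ pentagonal r := by
  have h := two_mul_pentagonal_natCast r
  rcases Nat.eq_zero_or_pos r with rfl | hr
  · simp
  · have : 3 * r ≤ 3 * r * r := Nat.le_mul_of_pos_right _ hr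
    omega

lemma le_pentagonal_neg_natCast (r : ℕ) : r ≤ pentagonal (-r) := by
  have h := two_mul_pentagonal_neg_natCast r
  nlinarith

lemma two_mul_eq_iff_eq_pentagonal_natCast (N r : ℕ) :
    2 * N = 3 * r * r - r ↔ N = pentagonal r := by
  have := two_mul_pentagonal_natCast r
  omega

lemma two_mul_eq_iff_eq_pentagonal_neg_natCast (N r : ℕ) :
    2 * N = 3 * r * r + r ↔ N = pentagonal (-r) := by
  have := two_mul_pentagonal_neg_natCast r
  omega

lemma Finset.sum_range_sub_eq_sum_nsmul {G : Type*} [AddCommGroup G] (p : ℕ → G) (M : ℕ) :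
    ∑ n ∈ range M, (p M - p n) = ∑ m ∈ range M, (m + 1) • (p (m + 1) - p m) := by
  induction M with
  | zero => simp
  | succ M ih =>
    have h : ∀ n, p (M + 1) - p n = (p (M + 1) - p M) + (p M - p n) := fun n => by abel
    rw [sum_range_succ, sum_congr rfl fun n _ => h n, sum_add_distrib, sum_const, card_range, ih,
      sum_range_succ, succ_nsmul]
    abel

lemma Finset.eq_sum_neg_one_pow_mul_add {R : Type*} [CommRing R] {u d : ℕ → R}
    (h : ∀ s, u s + u (s + 1) = d s) (S : ℕ) :
    u 0 = ∑ s ∈ range S, (-1) ^ s * d s + (-1) ^ S * u S := by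
  induction S with
  | zero => simp
  | succ S ih => rw [ih, sum_range_succ, ← h S]; ring

section TPochhammer

variable {R : Type*} [CommRing R] (x t : R)

-- `tPoch x t k n` is `(t x^{k+1}; x)_n`, `tPochSum x t k M` is `A_k(t)` cut off at `n < M`, and
-- `tPentagonalWeight x t s` is the factor in front of `A_s` after `s` steps of the iteration.
def tPoch (k n : ℕ) : R := ∏ i ∈ range n, (1 - t * x ^ (k + i + 1))

def tPochSum (k M : ℕ) : R := ∑ n ∈ range M, t ^ n * x ^ ((k + 1) * n) * tPoch x t k (n + 1)

def tPochTail (k n : ℕ) : R :=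
  t ^ n * x ^ ((k + 1) * n) * (t ^ 2 * x ^ (2 * k + n + 3) - 1) * tPoch x t (k + 1) n

def tPentagonalSum (S : ℕ) : R :=
  ∑ r ∈ range S, (-1) ^ r * (t ^ (3 * r + 2) * x ^ pentagonal (r + 1 : ℕ) +
    t ^ (3 * r + 3) * x ^ pentagonal (-(r + 1 : ℕ)))

def tPentagonalWeight (s : ℕ) : R := t ^ (3 * s + 3) * x ^ pentagonal (-(s + 1 : ℕ))

lemma tPoch_zero (k : ℕ) : tPoch x t k 0 = 1 := prod_range_zero _

lemma tPoch_succ (k n : ℕ) : tPoch x t k (n + 1) = tPoch x t k n * (1 - t * x ^ (k + n + 1)) :=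
  prod_range_succ _ n

lemma tPoch_succ' (k n : ℕ) :
    tPoch x t k (n + 1) = (1 - t * x ^ (k + 1)) * tPoch x t (k + 1) n := by
  rw [tPoch, prod_range_succ', mul_comm, tPoch, add_zero]
  congr 1
  exact prod_congr rfl fun i _ => by ring_nf

lemma one_sub_tPoch_eq_sum (M : ℕ) :
    1 - tPoch x t 0 M = ∑ m ∈ range M, t * x ^ (m + 1) * tPoch x t 0 m := by
  have h (m : ℕ) : t * x ^ (m + 1) * tPoch x t 0 m = tPoch x t 0 m - tPoch x t 0 (m + 1) := by
    rw [tPoch_succ]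
    ring_nf
  rw [sum_congr rfl fun m _ => h m, sum_range_sub', tPoch_zero]

lemma pow_dvd_tPochTail (k n : ℕ) : x ^ ((k + 1) * n) ∣ tPochTail x t k n :=
  dvd_mul_of_dvd_left (dvd_mul_of_dvd_left (dvd_mul_left _ _) _) _

lemma tPochSum_add_mul_tPochSum_succ (k M : ℕ) :
    tPochSum x t k M + t ^ 3 * x ^ (3 * k + 5) * tPochSum x t (k + 1) M =
      1 - t ^ 2 * x ^ (2 * k + 3) + tPochTail x t k M := by
  have h (n : ℕ) :
      t ^ n * x ^ ((k + 1) * n) * tPoch x t k (n + 1) +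
        t ^ 3 * x ^ (3 * k + 5) * (t ^ n * x ^ ((k + 1 + 1) * n) * tPoch x t (k + 1) (n + 1)) =
      tPochTail x t k (n + 1) - tPochTail x t k n := by
    simp only [tPochTail, tPoch_succ' x t k n, tPoch_succ x t (k + 1) n]
    ring
  rw [tPochSum, tPochSum, mul_sum, ← sum_add_distrib, sum_congr rfl fun n _ => h n, sum_range_sub]
  simp only [tPochTail, tPoch_zero]
  ring

lemma sum_range_succ_pow_mul_tPoch (M : ℕ) :
    ∑ m ∈ range (M + 1), t ^ (m + 2) * x ^ (m + 1) * tPoch x t 0 m =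
      t ^ 2 * x + t ^ 3 * x ^ 2 * tPochSum x t 0 M := by
  rw [sum_range_succ', tPochSum, mul_sum, add_comm, tPoch_zero]
  congr 1
  · ring
  · exact sum_congr rfl fun n _ => by ring

lemma tPentagonalWeight_zero : tPentagonalWeight x t 0 = t ^ 3 * x ^ 2 := by
  simp [tPentagonalWeight, show pentagonal (-1) = 2 by decide]

lemma tPentagonalWeight_succ (s : ℕ) :
    tPentagonalWeight x t (s + 1) = t ^ 3 * x ^ (3 * s + 5) * tPentagonalWeight x t s := by
  rw [tPentagonalWeight, tPentagonalWeight, pentagonal_neg_natCast_succ (s + 1)]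
  ring

lemma tPentagonalWeight_zero_mul_tPochSum (M S : ℕ) :
    tPentagonalWeight x t 0 * tPochSum x t 0 M =
      ∑ s ∈ range S, (-1) ^ s * (tPentagonalWeight x t s * (1 - t ^ 2 * x ^ (2 * s + 3))) +
      ∑ s ∈ range S, (-1) ^ s * (tPentagonalWeight x t s * tPochTail x t s M) +
      (-1) ^ S * (tPentagonalWeight x t S * tPochSum x t S M) := by
  rw [← sum_add_distrib]
  refine (eq_sum_neg_one_pow_mul_add (u := fun s => tPentagonalWeight x t s * tPochSum x t s M)
    (d := fun s => tPentagonalWeight x t s * (1 - t ^ 2 * x ^ (2 * s + 3)) +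
      tPentagonalWeight x t s * tPochTail x t s M) (fun s => ?_) S).trans ?_
  · rw [tPentagonalWeight_succ]
    linear_combination tPentagonalWeight x t s * tPochSum_add_mul_tPochSum_succ x t s M
  · exact congrArg (· + _) (sum_congr rfl fun s _ => mul_add _ _ _)

lemma sq_mul_add_sum_eq_tPentagonalSum (S : ℕ) :
    t ^ 2 * x +
        ∑ s ∈ range S, (-1) ^ s * (tPentagonalWeight x t s * (1 - t ^ 2 * x ^ (2 * s + 3))) =
      tPentagonalSum x t S + (-1) ^ S * t ^ (3 * S + 2) * x ^ pentagonal (S + 1 : ℕ) := by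
  induction S with
  | zero => simp [tPentagonalSum, show pentagonal 1 = 1 by decide]
  | succ S ih =>
    rw [sum_range_succ, ← add_assoc, ih, tPentagonalSum, tPentagonalSum, sum_range_succ,
      tPentagonalWeight, ← pentagonal_neg_natCast_add (S + 1)]
    ring

lemma sum_pow_mul_tPoch_eq_tPentagonalSum_add (M S : ℕ) :
    ∑ m ∈ range (M + 1), t ^ (m + 2) * x ^ (m + 1) * tPoch x t 0 m =
      tPentagonalSum x t S + (-1) ^ S * t ^ (3 * S + 2) * x ^ pentagonal (S + 1 : ℕ) +
        ∑ s ∈ range S, (-1) ^ s * (tPentagonalWeight x t s * tPochTail x t s M) +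
        (-1) ^ S * (tPentagonalWeight x t S * tPochSum x t S M) := by
  rw [sum_range_succ_pow_mul_tPoch, ← tPentagonalWeight_zero,
    tPentagonalWeight_zero_mul_tPochSum x t M S, ← sq_mul_add_sum_eq_tPentagonalSum]
  ring

theorem pow_dvd_sum_pow_mul_tPoch_sub_tPentagonalSum {n M S : ℕ} (hM : n ≤ M) (hS : n ≤ S) :
    x ^ n ∣ ∑ m ∈ range (M + 1), t ^ (m + 2) * x ^ (m + 1) * tPoch x t 0 m -
      tPentagonalSum x t S := by
  rw [sum_pow_mul_tPoch_eq_tPentagonalSum_add x t M S, add_sub_right_comm, add_sub_right_comm,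
    add_sub_cancel_left]
  refine dvd_add (dvd_add ?_ (dvd_sum fun s _ => ?_)) ?_
  · exact (pow_dvd_pow x (hS.trans (by have := le_pentagonal_natCast (S + 1); omega))).mul_left _
  · exact (dvd_mul_of_dvd_right ((pow_dvd_pow x (by nlinarith)).trans
      (pow_dvd_tPochTail x t s M)) _).mul_left _
  · exact (dvd_mul_of_dvd_left ((pow_dvd_pow x
      (hS.trans (by have := le_pentagonal_neg_natCast (S + 1); omega))).mul_left _) _).mul_left _

end TPochhammer

namespace DualNumber

open TrivSqZeroExt

lemma snd_mul_of_fst_eq_zero {A : Type*} [Semiring A] {a : A[ε]} (h : a.fst = 0) (b : A[ε]) :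
    (a * b).snd = a.snd * b.fst := by
  simp [h]

lemma pow_dvd_snd_of_inl_pow_dvd {A : Type*} [Semiring A] {a : A} {n : ℕ} {y : A[ε]}
    (h : inl a ^ n ∣ y) : a ^ n ∣ y.snd := by
  obtain ⟨w, rfl⟩ := h
  simp

lemma snd_neg_one_pow_mul {A : Type*} [CommRing A] (r : ℕ) (y : A[ε]) :
    ((-1) ^ r * y).snd = (-1) ^ r * y.snd := by
  simp

lemma snd_one_add_eps_pow_mul_inl {A : Type*} [CommSemiring A] (j : ℕ) (a : A) :
    ((1 + ε) ^ j * inl a : A[ε]).snd = j * a := by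
  simp

end DualNumber

lemma PowerSeries.coeff_eq_of_X_pow_dvd_sub {R : Type*} [Ring R] {a b : R⟦X⟧} {N : ℕ}
    (h : X ^ (N + 1) ∣ a - b) : coeff N a = coeff N b := by
  have := X_pow_dvd_iff.mp h N (by omega)
  rwa [map_sub, sub_eq_zero] at this

lemma coeff_geomSeries_of_lt {k N : ℕ} (h : N < k) : coeff N (geomSeries k) = 0 := by
  simp only [geomSeries, coeff_mk]
  exact if_neg fun ⟨hd, hN⟩ => absurd (Nat.le_of_dvd (Nat.pos_of_ne_zero hN) hd) (by omega)

lemma one_sub_X_pow_mul_geomSeries {k : ℕ} (hk : k ≠ 0) :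
    (1 - X ^ k) * geomSeries k = X ^ k := by
  ext N
  rw [sub_mul, one_mul, map_sub, mul_comm, coeff_mul_X_pow', coeff_X_pow]
  rcases lt_trichotomy N k with h | rfl | h
  · simp [coeff_geomSeries_of_lt h, h.not_ge, h.ne]
  · simp [geomSeries, hk]
  · have h₁ : (k ∣ N ∧ N ≠ 0) ↔ k ∣ N := by omega
    have h₂ : ((k ∣ N ∨ N ≤ k) ∧ N - k ≠ 0) ↔ k ∣ N := by omega
    simp only [geomSeries, coeff_mk, h.le, h.ne', if_true, if_false, Nat.dvd_sub_self_right, h₁,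
      h₂, sub_self]

lemma qPoch_succ (n : ℕ) : qPoch (n + 1) = qPoch n * (1 - X ^ (n + 1)) := prod_range_succ _ n

lemma coeff_qPoch_of_le {N m : ℕ} (h : N ≤ m) : coeff N (qPoch m) = coeff N (qPoch N) := by
  induction m, h using Nat.le_induction with
  | base => rfl
  | succ m hm ih =>
    rw [← ih]
    refine coeff_eq_of_X_pow_dvd_sub ?_
    rw [qPoch_succ, show qPoch m * (1 - X ^ (m + 1)) - qPoch m = -(X ^ (m + 1) * qPoch m) by ring]
    exact dvd_neg.2 ((pow_dvd_pow X (by omega)).mul_right _)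

lemma coeff_eulerProd {N M : ℕ} (h : N ≤ M) : coeff N eulerProd = coeff N (qPoch M) := by
  rw [eulerProd, coeff_mk, coeff_qPoch_of_le h]

lemma coeff_lambertSum {N M : ℕ} (h : N ≤ M) :
    coeff N lambertSum = coeff N (∑ k ∈ Icc 1 M, geomSeries k) := by
  rw [lambertSum, coeff_mk, map_sum]
  refine sum_subset (Icc_subset_Icc_right h) fun k hk hk' => coeff_geomSeries_of_lt ?_
  simp only [mem_Icc] at hk hk'
  omega

lemma coeff_eulerProd_mul_lambertSum {N M : ℕ} (h : N ≤ M) :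
    coeff N (eulerProd * lambertSum) = coeff N (qPoch M * ∑ k ∈ Icc 1 M, geomSeries k) := by
  simp only [coeff_mul]
  refine sum_congr rfl fun p hp => ?_
  rw [coeff_eulerProd ((HasAntidiagonal.antidiagonal.fst_le hp).trans h),
    coeff_lambertSum ((HasAntidiagonal.antidiagonal.snd_le hp).trans h)]

lemma coeff_zagierLHS {N M : ℕ} (h : N ≤ M) :
    coeff N zagierLHS = coeff N (∑ n ∈ range M, (qPoch M - qPoch n)) := by
  simp only [zagierLHS, coeff_mk, map_sum, map_sub, coeff_eulerProd h]
  refine sum_subset (range_subset_range.2 h) fun n hn hn' => ?_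
  simp only [mem_range, not_lt] at hn hn'
  rw [coeff_qPoch_of_le h, coeff_qPoch_of_le hn', sub_self]

section DerivativeAtOne

open DualNumber TrivSqZeroExt

local notation "ξ" => (inl (X : ℤ⟦X⟧) : ℤ⟦X⟧[ε])
local notation "τ" => (1 + ε : ℤ⟦X⟧[ε])

lemma fst_tPoch_inl_X_one_add_eps (n : ℕ) : (tPoch ξ τ 0 n).fst = qPoch n := by
  induction n with
  | zero => simp [tPoch, qPoch]
  | succ n ih => simp [tPoch_succ, qPoch_succ, ih]

lemma snd_tPoch_inl_X_one_add_eps (n : ℕ) :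
    (tPoch ξ τ 0 n).snd = -(qPoch n * ∑ k ∈ Icc 1 n, geomSeries k) := by
  induction n with
  | zero => simp [tPoch]
  | succ n ih =>
    rw [tPoch_succ, DualNumber.snd_mul, ih, fst_tPoch_inl_X_one_add_eps, qPoch_succ,
      sum_Icc_succ_top (by omega)]
    have hfst : (1 - τ * ξ ^ (0 + n + 1)).fst = 1 - X ^ (n + 1) := by simp
    have hsnd : (1 - τ * ξ ^ (0 + n + 1)).snd = -X ^ (n + 1) := by simp
    rw [hfst, hsnd]
    linear_combination qPoch n * one_sub_X_pow_mul_geomSeries (k := n + 1) (by omega)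

lemma sum_qPoch_sub_qPoch (M : ℕ) :
    ∑ n ∈ range M, (qPoch M - qPoch n) =
      qPoch M * ∑ k ∈ Icc 1 M, geomSeries k -
        (∑ m ∈ range M, τ ^ (m + 2) * ξ ^ (m + 1) * tPoch ξ τ 0 m).snd := by
  have hT : qPoch M * ∑ k ∈ Icc 1 M, geomSeries k = (1 - tPoch ξ τ 0 M).snd := by
    simp [snd_tPoch_inl_X_one_add_eps]
  rw [hT, one_sub_tPoch_eq_sum, ← snd_sub, ← sum_sub_distrib, snd_sum,
    sum_range_sub_eq_sum_nsmul]
  refine sum_congr rfl fun m _ => ?_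
  have hfst : (ξ ^ (m + 1) * tPoch ξ τ 0 m).fst = X ^ (m + 1) * qPoch m := by
    simp [fst_tPoch_inl_X_one_add_eps]
  have hsnd : (τ - τ ^ (m + 2)).snd = 1 - ((m + 2 : ℕ) : ℤ⟦X⟧) := by simp
  rw [show τ * ξ ^ (m + 1) * tPoch ξ τ 0 m - τ ^ (m + 2) * ξ ^ (m + 1) * tPoch ξ τ 0 m =
      (τ - τ ^ (m + 2)) * (ξ ^ (m + 1) * tPoch ξ τ 0 m) by ring,
    snd_mul_of_fst_eq_zero (by simp), hfst, hsnd, qPoch_succ, nsmul_eq_mul]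
  push_cast
  ring

lemma snd_tPentagonalSum_inl_X_one_add_eps (S : ℕ) :
    (tPentagonalSum ξ τ S).snd = ∑ r ∈ range S,
      (C ((-1 : ℤ) ^ r * (3 * r + 2)) * X ^ pentagonal (r + 1 : ℕ) +
        C ((-1 : ℤ) ^ r * (3 * r + 3)) * X ^ pentagonal (-(r + 1 : ℕ))) := by
  simp only [tPentagonalSum, snd_sum]
  refine sum_congr rfl fun r _ => ?_
  rw [snd_neg_one_pow_mul, snd_add, inl_pow, inl_pow, snd_one_add_eps_pow_mul_inl,
    snd_one_add_eps_pow_mul_inl]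
  simp only [map_mul, map_pow, map_neg, map_one, map_add, map_natCast, map_ofNat]
  push_cast
  ring

lemma coeff_pentagonalDerivSeries {N S : ℕ} (h : N ≤ S) :
    coeff N pentagonalDerivSeries = -coeff N (tPentagonalSum ξ τ S).snd := by
  rw [snd_tPentagonalSum_inl_X_one_add_eps, pentagonalDerivSeries, coeff_mk, map_sum,
    ← sum_neg_distrib, ← Ico_add_one_right_eq_Icc, sum_Ico_eq_sum_range, add_tsub_cancel_right]
  symm
  rw [← sum_subset (range_subset_range.2 h) fun r _ hr => ?_]
  · refine sum_congr rfl fun r _ => ?_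
    simp only [map_add, coeff_C_mul_X_pow, add_comm 1 r, two_mul_eq_iff_eq_pentagonal_natCast,
      two_mul_eq_iff_eq_pentagonal_neg_natCast]
    split_ifs <;> push_cast <;> ring
  · simp only [mem_range, not_lt] at hr
    have h₁ := le_pentagonal_natCast (r + 1)
    have h₂ := le_pentagonal_neg_natCast (r + 1)
    simp only [map_add, coeff_C_mul_X_pow]
    rw [if_neg (by omega), if_neg (by omega), add_zero, neg_zero]

lemma coeff_snd_sum_pow_mul_tPoch {N M : ℕ} (h : N < M) :
    coeff N (∑ m ∈ range (M + 1), τ ^ (m + 2) * ξ ^ (m + 1) * tPoch ξ τ 0 m).snd =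
      -coeff N pentagonalDerivSeries := by
  have hW := pow_dvd_snd_of_inl_pow_dvd
    (pow_dvd_sum_pow_mul_tPoch_sub_tPentagonalSum ξ τ h (le_refl (N + 1)))
  rw [snd_sub] at hW
  rw [coeff_eq_of_X_pow_dvd_sub hW, coeff_pentagonalDerivSeries N.le_succ, neg_neg]

end DerivativeAtOne

/-- Zagier's identity: `Σ_{n=0}^∞ [(q)_∞ - (q)_n]
= (q)_∞ · Σ_{k=1}^∞ q^k/(1-q^k) + Σ_{r=1}^∞ (-1)^r [(3r-1) q^{r(3r-1)/2} + 3r q^{r(3r+1)/2}]`. -/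
theorem zagier_identity :
    zagierLHS = eulerProd * lambertSum + pentagonalDerivSeries := by
  ext N
  rw [map_add, coeff_zagierLHS (M := N + 1 + 1) (by omega), sum_qPoch_sub_qPoch, map_sub,
    ← coeff_eulerProd_mul_lambertSum (by omega), coeff_snd_sum_pow_mul_tPoch (lt_add_one N)]
  ring
end

section
/- In the ring of formal power series in q with integer coefficients, Σ_{n=0}^∞ [(q)_∞ − (q)_n] = Σ_{λ ∈ 𝒟} (−1)^{n_λ} m_λ q^{N_λ}; equivalently, for every N ≥ 0, Σ_{n=0}^∞ (coefficient of q^N in (q)_∞ − (q)_n) = Σ_{λ ∈ 𝒟_N} (−1)^{n_λ} m_λ (the outer sum on the left has only finitely many nonzero terms since the coefficient vanishes for n ≥ N). -/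
open PowerSeries Finset

/-- `𝒟_N`: the partitions of `N` into distinct parts, encoded as finsets of positive
integers summing to `N` (all parts are at most `N`). -/
def distinctPartitions (N : ℕ) : Finset (Finset ℕ) :=
  (Finset.Icc 1 N).powerset.filter fun s => s.sum id = N

/-!
Expanding `∏_{k=1}^n (1 - q^k)` shows that its coefficient of `q^N` is the signed count of the
partitions of `N` into distinct parts all at most `n`, so the coefficient of `q^N` in
`(q)_∞ - (q)_n` is the signed count of those with largest part greater than `n`. Summing over
`n`, each partition `λ` is counted once for every `n < m_λ`, that is `m_λ` times.
-/

theorem coeff_prod_one_sub_X_pow {R : Type*} [CommRing R] (s : Finset ℕ) (N : ℕ) :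
    coeff N (∏ k ∈ s, (1 - X ^ k : R⟦X⟧))
      = ∑ t ∈ s.powerset with t.sum id = N, (-1 : R) ^ #t := by
  rw [prod_sub, map_sum, sum_filter]
  refine sum_congr rfl fun t _ => ?_
  rw [prod_const_one, mul_one, prod_pow_eq_pow_sum, ← map_one C, ← map_neg, ← map_pow,
    coeff_C_mul_X_pow]
  simp only [id, eq_comm]

theorem qPoch_eq_prod_Icc (n : ℕ) : qPoch n = ∏ k ∈ Icc 1 n, (1 - X ^ k : ℤ⟦X⟧) := by
  rw [qPoch, range_eq_Ico, prod_Ico_add' (fun k => 1 - X ^ k), zero_add,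
    Ico_add_one_right_eq_Icc]

theorem sup_le_of_mem_distinctPartitions {N : ℕ} {s : Finset ℕ}
    (hs : s ∈ distinctPartitions N) : s.sup id ≤ N := by
  rw [distinctPartitions, mem_filter, mem_powerset] at hs
  exact Finset.sup_le fun x hx => (mem_Icc.mp (hs.1 hx)).2

theorem coeff_qPoch (n N : ℕ) :
    coeff N (qPoch n) = ∑ s ∈ distinctPartitions N with s.sup id ≤ n, (-1 : ℤ) ^ #s := by
  rw [qPoch_eq_prod_Icc, coeff_prod_one_sub_X_pow, distinctPartitions, filter_filter]
  congr 1
  ext s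
  simp only [mem_filter, mem_powerset, subset_iff, mem_Icc, Finset.sup_le_iff]
  have part_le_sum : ∀ x ∈ s, x ≤ s.sum id := fun x hx =>
    single_le_sum (f := id) (fun _ _ => Nat.zero_le _) hx
  constructor
  · rintro ⟨hs, hsum⟩
    exact ⟨fun x hx => ⟨(hs hx).1, hsum ▸ part_le_sum x hx⟩, hsum, fun x hx => (hs hx).2⟩
  · rintro ⟨hs, hsum, hsup⟩
    exact ⟨fun x hx => ⟨(hs hx).1, hsup x hx⟩, hsum⟩

theorem coeff_eulerProd_s5 (N : ℕ) :
    coeff N eulerProd = ∑ s ∈ distinctPartitions N, (-1 : ℤ) ^ #s := by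
  rw [eulerProd, coeff_mk, coeff_qPoch,
    filter_true_of_mem fun _ => sup_le_of_mem_distinctPartitions]

theorem coeff_eulerProd_sub_qPoch (n N : ℕ) :
    coeff N (eulerProd - qPoch n)
      = ∑ s ∈ distinctPartitions N with n < s.sup id, (-1 : ℤ) ^ #s := by
  rw [map_sub, coeff_eulerProd_s5, coeff_qPoch,
    ← sum_filter_add_sum_filter_not (distinctPartitions N) (fun s => s.sup id ≤ n)]
  simp only [not_le, add_sub_cancel_left]

theorem card_filter_range_lt {m N : ℕ} (h : m ≤ N) : #{n ∈ range N | n < m} = m := by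
  rw [range_eq_Ico, Ico_filter_lt, Nat.card_Ico, min_eq_right h, Nat.sub_zero]

/-- `Σ_{n=0}^∞ [(q)_∞ - (q)_n] = Σ_{λ ∈ 𝒟} (-1)^{n_λ} m_λ q^{N_λ}`: for every `N ≥ 0`,
`Σ_{n=0}^∞ (coefficient of q^N in (q)_∞ - (q)_n) = Σ_{λ ∈ 𝒟_N} (-1)^{n_λ} m_λ`,
where `m_λ = s.sup id` is the largest part (`0` for the empty partition).
The outer sum on the left has only finitely many nonzero terms since the
coefficient vanishes for `n ≥ N`. -/
theorem sum_qPoch_diff_eq_signed_sum_largest_part (N : ℕ) :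
    ∑ n ∈ Finset.range N, PowerSeries.coeff N (eulerProd - qPoch n)
      = ∑ s ∈ distinctPartitions N, (-1 : ℤ) ^ s.card * ((s.sup (id : ℕ → ℕ) : ℕ) : ℤ) := by
  simp_rw [coeff_eulerProd_sub_qPoch, sum_filter]
  rw [sum_comm]
  refine sum_congr rfl fun s hs => ?_
  rw [← sum_filter, sum_const, card_filter_range_lt (sup_le_of_mem_distinctPartitions hs),
    nsmul_eq_mul, mul_comm]
end

section
/- In the ring of formal power series in two variables x and q with integer coefficients, Σ_{λ ∈ 𝒟} (−1)^{n_λ} x^{m_λ + n_λ} q^{N_λ} = 1 + Σ_{r=1}^∞ (−1)^r [x^{3r−1} q^{r(3r−1)/2} + x^{3r} q^{r(3r+1)/2}]. -/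
open PowerSeries Finset

/-- `ℤ⟦x,q⟧`, realized as `(ℤ⟦q⟧)⟦x⟧`: power series in `x` whose coefficients are
power series in `q` over `ℤ`. -/
abbrev Zxq : Type := PowerSeries (PowerSeries ℤ)

/-- The variable `x`. -/
noncomputable def xv : Zxq := PowerSeries.X

/-- The variable `q`. -/
noncomputable def qv : Zxq := PowerSeries.C (PowerSeries.X : PowerSeries ℤ)

/-- `Σ_{λ ∈ 𝒟} (-1)^{n_λ} x^{m_λ+n_λ} q^{N_λ}`, summed over all partitions `λ` into
distinct parts (encoded as finsets of positive integers, with `n_λ = s.card`,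
`m_λ = s.sup id`, `N_λ = s.sum id`). The coefficient of `x^a` collects the finitely
many partitions with `m_λ + n_λ = a` (all of whose parts are at most `a`, so they
are subsets of `{1,…,a}`). -/
noncomputable def signedPartitionSeries : Zxq :=
  PowerSeries.mk fun a =>
    ∑ s ∈ (Finset.Icc 1 a).powerset.filter (fun s => s.sup (id : ℕ → ℕ) + s.card = a),
      (-1 : PowerSeries ℤ) ^ s.card * (PowerSeries.X : PowerSeries ℤ) ^ s.sum id

/-- `1 + Σ_{r=1}^∞ (-1)^r [x^{3r-1} q^{r(3r-1)/2} + x^{3r} q^{r(3r+1)/2}]`, defined by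
its coefficient of `x^a`: only terms with `r ≤ a` contribute. -/
noncomputable def pentagonalXqSeries : Zxq :=
  PowerSeries.mk fun a =>
    (if a = 0 then 1 else 0) +
      ∑ r ∈ Finset.Icc 1 a, (-1 : PowerSeries ℤ) ^ r *
        ((if a = 3 * r - 1 then (PowerSeries.X : PowerSeries ℤ) ^ (r * (3 * r - 1) / 2) else 0) +
         (if a = 3 * r then (PowerSeries.X : PowerSeries ℤ) ^ (r * (3 * r + 1) / 2) else 0))

/-!
Franklin's involution. For a partition into distinct parts with smallest part `k` (the base),
largest part `m`, and slope `σ` (the length of the run `m, m - 1, …` of parts), either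
`k ≤ σ`: remove the base and add one to each of the `k` largest parts, or `k > σ`: subtract one
from each of the `σ` largest parts and add a new part `σ`. The first move lowers the number of
parts `n` by one and raises `m` by one, the second does the opposite, so both keep `m + n` and
the sum of the parts and flip the sign `(-1)^n`; they are mutually inverse. The move is
impossible exactly when the base lies in the slope and `k = σ` or `k = σ + 1`, i.e. for
`{r + 1, …, 2r + 1}` and `{r + 1, …, 2r}`; these survive the cancellation and give the terms
`x^(3r+2) q^((r+1)(3r+2)/2)` and `x^(3r) q^(r(3r+1)/2)` of the right-hand side.
-/

namespace Franklin

lemma isLeast_coe_Icc {a b : ℕ} (hab : a ≤ b) : IsLeast (Icc a b : Set ℕ) a := by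
  rw [coe_Icc]; exact isLeast_Icc hab

lemma isGreatest_coe_Icc {a b : ℕ} (hab : a ≤ b) : IsGreatest (Icc a b : Set ℕ) b := by
  rw [coe_Icc]; exact isGreatest_Icc hab

def slope (s : Finset ℕ) (m : ℕ) : ℕ :=
  Nat.findGreatest (fun j => Ioc (m - j) m ⊆ s) m

section Slope

variable {s : Finset ℕ} {m t x : ℕ}

lemma Ioc_sub_slope_subset : Ioc (m - slope s m) m ⊆ s :=
  Nat.findGreatest_spec (P := fun j => Ioc (m - j) m ⊆ s) (Nat.zero_le m) (by simp)

lemma mem_of_sub_slope_lt (h₁ : m - slope s m < x) (h₂ : x ≤ m) : x ∈ s :=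
  Ioc_sub_slope_subset (mem_Ioc.2 ⟨h₁, h₂⟩)

lemma slope_le : slope s m ≤ m := Nat.findGreatest_le m

lemma le_slope (htm : t ≤ m) (ht : Ioc (m - t) m ⊆ s) : t ≤ slope s m :=
  Nat.le_findGreatest htm ht

lemma one_le_slope (hm : m ∈ s) (hm₀ : m ≠ 0) : 1 ≤ slope s m :=
  le_slope (by omega) fun x hx => by
    obtain rfl : x = m := by rw [mem_Ioc] at hx; omega
    exact hm

lemma sub_slope_notMem (h₀ : 0 ∉ s) : m - slope s m ∉ s := by
  intro hmem
  rcases slope_le.lt_or_eq with hlt | heq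
  · have hnot : ¬ Ioc (m - (slope s m + 1)) m ⊆ s :=
      Nat.findGreatest_is_greatest (Nat.lt_succ_self _) hlt
    refine hnot fun y hy => ?_
    rw [mem_Ioc] at hy
    rcases eq_or_lt_of_le (Nat.succ_le_of_lt hy.1) with hy' | hy'
    · rwa [← show m - slope s m = y by omega]
    · exact mem_of_sub_slope_lt (by omega) hy.2
  · rw [heq, Nat.sub_self] at hmem
    exact h₀ hmem

lemma slope_eq (htm : t ≤ m) (ht : Ioc (m - t) m ⊆ s) (hnot : m - t ∉ s) : slope s m = t := by
  refine le_antisymm (not_lt.1 fun hlt => hnot ?_) (le_slope htm ht)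
  exact mem_of_sub_slope_lt (m := m) (by have := @slope_le s m; omega) (by omega)

lemma slope_Icc {a b : ℕ} (ha : 1 ≤ a) (hab : a ≤ b + 1) : slope (Icc a b) b = b + 1 - a :=
  slope_eq (by omega) (fun x hx => by rw [mem_Ioc] at hx; rw [mem_Icc]; omega)
    (by rw [mem_Icc]; omega)

lemma eq_Icc_of_lt_add_slope {s : Finset ℕ} {k m : ℕ} (hk : IsLeast (s : Set ℕ) k)
    (hm : IsGreatest (s : Set ℕ) m) (h : m < k + slope s m) : s = Icc k m := by
  have := @slope_le s m
  ext x
  rw [mem_Icc]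
  exact ⟨fun hx => ⟨hk.2 hx, hm.2 hx⟩,
    fun hx => mem_of_sub_slope_lt (m := m) (by omega) hx.2⟩

end Slope

-- Raising the `k` largest parts `m + 1 - k, …, m` by one only trades `m + 1 - k` for `m + 1`.
def moveBase (s : Finset ℕ) (k m : ℕ) : Finset ℕ :=
  insert (m + 1) ((s.erase k).erase (m + 1 - k))

-- Lowering the `slope s m` largest parts by one only trades `m` for `m - slope s m`.
def moveSlope (s : Finset ℕ) (m : ℕ) : Finset ℕ :=
  insert (slope s m) (insert (m - slope s m) (s.erase m))

lemma mem_moveBase {s : Finset ℕ} {k m x : ℕ} :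
    x ∈ moveBase s k m ↔ x = m + 1 ∨ x ≠ m + 1 - k ∧ x ≠ k ∧ x ∈ s := by
  simp only [moveBase, mem_insert, mem_erase]

lemma mem_moveSlope {s : Finset ℕ} {m x : ℕ} :
    x ∈ moveSlope s m ↔ x = slope s m ∨ x = m - slope s m ∨ x ≠ m ∧ x ∈ s := by
  simp only [moveSlope, mem_insert, mem_erase]

def level (s : Finset ℕ) : ℕ := s.sup id + s.card

noncomputable def signedWeight (s : Finset ℕ) : PowerSeries ℤ :=
  (-1) ^ s.card * PowerSeries.X ^ s.sum id

/- The excluded equalities are Franklin's exceptional cases: the smallest part lies in the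
slope and equals `slope s m` (for `BaseMovable`) or `slope s m + 1` (for `SlopeMovable`). -/
structure BaseMovable (s : Finset ℕ) (k m : ℕ) : Prop where
  zero_notMem : 0 ∉ s
  isLeast : IsLeast (s : Set ℕ) k
  isGreatest : IsGreatest (s : Set ℕ) m
  le_slope : k ≤ slope s m
  ne : m + 1 ≠ 2 * k

structure SlopeMovable (s : Finset ℕ) (m : ℕ) : Prop where
  zero_notMem : 0 ∉ s
  isGreatest : IsGreatest (s : Set ℕ) m
  slope_lt : ∀ x ∈ s, slope s m < x
  ne : m ≠ 2 * slope s m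

namespace BaseMovable

variable {s : Finset ℕ} {k m : ℕ}

lemma one_le (h : BaseMovable s k m) : 1 ≤ k :=
  Nat.one_le_iff_ne_zero.2 fun hk => h.zero_notMem (hk ▸ h.isLeast.1)

lemma le_max (h : BaseMovable s k m) : k ≤ m := h.isGreatest.2 h.isLeast.1

lemma sub_mem (h : BaseMovable s k m) : m + 1 - k ∈ s := by
  have := h.le_slope; have := h.one_le; have := h.le_max
  exact mem_of_sub_slope_lt (m := m) (by omega) (by omega)

lemma lt_sub (h : BaseMovable s k m) : k < m + 1 - k :=
  lt_of_le_of_ne (h.isLeast.2 h.sub_mem) (by have := h.ne; omega)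

lemma slope_moveBase (h : BaseMovable s k m) : slope (moveBase s k m) (m + 1) = k := by
  have := h.le_slope; have := h.lt_sub; have := h.one_le
  refine slope_eq (by omega) (fun y hy => ?_) ?_
  · rw [mem_Ioc] at hy
    rw [mem_moveBase]
    rcases eq_or_lt_of_le hy.2 with hy' | hy'
    · exact Or.inl hy'
    · exact Or.inr ⟨by omega, by omega, mem_of_sub_slope_lt (m := m) (by omega) (by omega)⟩
  · rw [mem_moveBase]
    omega

lemma slopeMovable_moveBase (h : BaseMovable s k m) : SlopeMovable (moveBase s k m) (m + 1) where
  zero_notMem := by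
    rw [mem_moveBase]
    rintro (h₀ | ⟨-, -, h₀⟩)
    exacts [absurd h₀ (by omega), h.zero_notMem h₀]
  isGreatest := by
    refine ⟨mem_moveBase.2 (Or.inl rfl), fun x hx => ?_⟩
    rcases mem_moveBase.1 hx with rfl | ⟨-, -, hx⟩
    exacts [le_rfl, (h.isGreatest.2 hx).trans (Nat.le_succ m)]
  slope_lt := by
    rw [h.slope_moveBase]
    intro x hx
    rcases mem_moveBase.1 hx with rfl | ⟨-, hxk, hx⟩
    exacts [Nat.lt_succ_of_le h.le_max, lt_of_le_of_ne (h.isLeast.2 hx) (Ne.symm hxk)]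
  ne := by rw [h.slope_moveBase]; exact h.ne

lemma sub_mem_erase (h : BaseMovable s k m) : m + 1 - k ∈ s.erase k :=
  mem_erase.2 ⟨h.lt_sub.ne', h.sub_mem⟩

lemma succ_notMem_erase (h : BaseMovable s k m) : m + 1 ∉ (s.erase k).erase (m + 1 - k) :=
  fun hm => Nat.not_succ_le_self m (h.isGreatest.2 (mem_of_mem_erase (mem_of_mem_erase hm)))

lemma moveSlope_moveBase (h : BaseMovable s k m) : moveSlope (moveBase s k m) (m + 1) = s := by
  rw [moveSlope, h.slope_moveBase, moveBase, erase_insert h.succ_notMem_erase,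
    insert_erase h.sub_mem_erase, insert_erase h.isLeast.1]

lemma card_moveBase (h : BaseMovable s k m) : (moveBase s k m).card + 1 = s.card := by
  rw [moveBase, card_insert_of_notMem h.succ_notMem_erase, card_erase_add_one h.sub_mem_erase,
    card_erase_add_one h.isLeast.1]

lemma sum_moveBase (h : BaseMovable s k m) : (moveBase s k m).sum id = s.sum id := by
  have e₁ := add_sum_erase _ id h.sub_mem_erase
  have e₂ := add_sum_erase _ id h.isLeast.1
  rw [moveBase, sum_insert h.succ_notMem_erase]
  simp only [id] at e₁ e₂ ⊢
  have := h.le_max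
  omega

lemma level_moveBase (h : BaseMovable s k m) :
    level (moveBase s k m) = level s := by
  have h₁ := isLUB_sup_id.unique h.slopeMovable_moveBase.isGreatest.isLUB
  have h₂ := isLUB_sup_id.unique h.isGreatest.isLUB
  have := h.card_moveBase
  rw [level, level, h₁, h₂]
  omega

lemma signedWeight_moveBase (h : BaseMovable s k m) :
    signedWeight (moveBase s k m) = -signedWeight s := by
  rw [signedWeight, signedWeight, ← h.card_moveBase, h.sum_moveBase, pow_succ]
  ring

end BaseMovable

namespace SlopeMovable

variable {s : Finset ℕ} {m : ℕ}

lemma one_le_slope (h : SlopeMovable s m) : 1 ≤ slope s m :=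
  Franklin.one_le_slope h.isGreatest.1 fun hm => h.zero_notMem (hm ▸ h.isGreatest.1)

lemma two_mul_slope_lt (h : SlopeMovable s m) : 2 * slope s m < m := by
  have := h.one_le_slope; have := @slope_le s m
  have := h.slope_lt _ (mem_of_sub_slope_lt (m := m) (x := m - slope s m + 1) (by omega) (by omega))
  have := h.ne
  omega

lemma slope_notMem (h : SlopeMovable s m) : slope s m ∉ s := fun hσ => (h.slope_lt _ hσ).false

lemma baseMovable_moveSlope (h : SlopeMovable s m) :
    BaseMovable (moveSlope s m) (slope s m) (m - 1) where
  zero_notMem := by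
    have := h.two_mul_slope_lt; have := h.one_le_slope
    rw [mem_moveSlope]
    rintro (h₀ | h₀ | ⟨-, h₀⟩)
    exacts [absurd h₀ (by omega), absurd h₀ (by omega), h.zero_notMem h₀]
  isLeast := by
    have := h.two_mul_slope_lt
    refine ⟨mem_moveSlope.2 (Or.inl rfl), fun x hx => ?_⟩
    rcases mem_moveSlope.1 hx with rfl | rfl | ⟨-, hx⟩
    exacts [le_rfl, by omega, (h.slope_lt x hx).le]
  isGreatest := by
    have := h.two_mul_slope_lt; have := h.one_le_slope
    refine ⟨?_, fun x hx => ?_⟩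
    · rw [mem_coe, mem_moveSlope]
      rcases eq_or_lt_of_le h.one_le_slope with h₁ | h₁
      · exact Or.inr (Or.inl (by omega))
      · exact Or.inr (Or.inr ⟨by omega, mem_of_sub_slope_lt (m := m) (by omega) (by omega)⟩)
    · rcases mem_moveSlope.1 hx with rfl | rfl | ⟨hxm, hx⟩
      · omega
      · omega
      · have := h.isGreatest.2 hx; omega
  le_slope := by
    have := h.two_mul_slope_lt
    refine Franklin.le_slope (by omega) fun y hy => ?_
    rw [mem_Ioc] at hy
    rw [mem_moveSlope]
    rcases eq_or_lt_of_le (Nat.succ_le_of_lt hy.1) with hy' | hy'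
    · exact Or.inr (Or.inl (by omega))
    · exact Or.inr (Or.inr ⟨by omega, mem_of_sub_slope_lt (m := m) (by omega) (by omega)⟩)
  ne := by have := h.two_mul_slope_lt; omega

lemma moveBase_moveSlope (h : SlopeMovable s m) :
    moveBase (moveSlope s m) (slope s m) (m - 1) = s := by
  have := h.two_mul_slope_lt
  have hm : m - slope s m ∉ s.erase m := fun hm => sub_slope_notMem h.zero_notMem
    (mem_of_mem_erase hm)
  have hσ : slope s m ∉ insert (m - slope s m) (s.erase m) := by
    rw [mem_insert, not_or]
    exact ⟨by omega, fun hσ => h.slope_notMem (mem_of_mem_erase hσ)⟩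
  rw [moveBase, moveSlope, erase_insert hσ, show m - 1 + 1 - slope s m = m - slope s m by omega,
    erase_insert hm, show m - 1 + 1 = m by omega, insert_erase h.isGreatest.1]

end SlopeMovable

def IsPentagonal (s : Finset ℕ) : Prop :=
  ∃ r, s = Icc (r + 1) (2 * r + 1) ∨ s = Icc (r + 1) (2 * r)

noncomputable instance : DecidablePred IsPentagonal := Classical.decPred _

lemma BaseMovable.not_isPentagonal {s : Finset ℕ} {k m : ℕ} (h : BaseMovable s k m) :
    ¬ IsPentagonal s := by
  rintro ⟨r, rfl | rfl⟩
  all_goals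
    have hab := mem_Icc.1 h.isLeast.1
    have hk := h.isLeast.unique (isLeast_coe_Icc (by omega))
    have hm := h.isGreatest.unique (isGreatest_coe_Icc (by omega))
    have := h.ne
  · omega
  · have := h.le_slope
    rw [hm, slope_Icc (by omega) (by omega)] at this
    omega

lemma SlopeMovable.not_isPentagonal {s : Finset ℕ} {m : ℕ} (h : SlopeMovable s m) :
    ¬ IsPentagonal s := by
  rintro ⟨r, rfl | rfl⟩
  all_goals
    have hab := mem_Icc.1 h.isGreatest.1
    have hm := h.isGreatest.unique (isGreatest_coe_Icc (by omega))
    have := h.ne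
    rw [hm, slope_Icc (by omega) (by omega)] at this
  · have := h.slope_lt (r + 1) (by rw [mem_Icc]; omega)
    rw [hm, slope_Icc (by omega) (by omega)] at this
    omega
  · omega

lemma baseMovable_or_slopeMovable {s : Finset ℕ} (h₀ : 0 ∉ s) (hp : ¬ IsPentagonal s) :
    (∃ k m, BaseMovable s k m) ∨ ∃ m, SlopeMovable s m := by
  have hne : s.Nonempty := nonempty_iff_ne_empty.2 fun he => hp ⟨0, Or.inr (by simp [he])⟩
  have hk := isLeast_min' s hne
  have hm := isGreatest_max' s hne
  set k := s.min' hne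
  set m := s.max' hne
  have hk₀ : k ≠ 0 := fun hk₀ => h₀ (hk₀ ▸ hk.1)
  by_cases hks : k ≤ slope s m
  · refine Or.inl ⟨k, m, h₀, hk, hm, hks, fun he => hp ⟨k - 1, Or.inl ?_⟩⟩
    rw [eq_Icc_of_lt_add_slope hk hm (by omega)]
    congr 1 <;> omega
  · refine Or.inr ⟨m, h₀, hm, fun x hx => by have := hk.2 hx; omega, fun he => hp ?_⟩
    have hσ : m - slope s m + 1 ∈ s := by
      have := one_le_slope hm.1 (fun hm₀ => h₀ (hm₀ ▸ hm.1))
      exact mem_of_sub_slope_lt (m := m) (by omega) (by omega)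
    have hkσ : k = slope s m + 1 := le_antisymm (by have := hk.2 hσ; omega) (by omega)
    have hs := eq_Icc_of_lt_add_slope hk hm (by omega)
    rw [hkσ] at hs
    exact ⟨slope s m, Or.inr (hs.trans (congrArg _ he))⟩

def franklin (s : Finset ℕ) : Finset ℕ :=
  if h : s.Nonempty then
    if s.min' h ≤ slope s (s.max' h) then moveBase s (s.min' h) (s.max' h)
    else moveSlope s (s.max' h)
  else s

lemma franklin_of_baseMovable {s : Finset ℕ} {k m : ℕ} (h : BaseMovable s k m) :
    franklin s = moveBase s k m := by
  have hne : s.Nonempty := ⟨k, h.isLeast.1⟩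
  have hk : s.min' hne = k := (isLeast_min' s hne).unique h.isLeast
  have hm : s.max' hne = m := (isGreatest_max' s hne).unique h.isGreatest
  rw [franklin, dif_pos hne, hk, hm, if_pos h.le_slope]

lemma franklin_of_slopeMovable {s : Finset ℕ} {m : ℕ} (h : SlopeMovable s m) :
    franklin s = moveSlope s m := by
  have hne : s.Nonempty := ⟨m, h.isGreatest.1⟩
  have hm : s.max' hne = m := (isGreatest_max' s hne).unique h.isGreatest
  rw [franklin, dif_pos hne, hm, if_neg (not_le.2 (h.slope_lt _ (min'_mem s hne)))]

section Involution

variable {s : Finset ℕ}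

lemma exists_baseMovable_franklin (h₀ : 0 ∉ s) (hp : ¬ IsPentagonal s) :
    ∃ k m, BaseMovable s k m ∧ franklin s = moveBase s k m ∨
      BaseMovable (franklin s) k m ∧ s = moveBase (franklin s) k m := by
  rcases baseMovable_or_slopeMovable h₀ hp with ⟨k, m, h⟩ | ⟨m, h⟩
  · exact ⟨k, m, Or.inl ⟨h, franklin_of_baseMovable h⟩⟩
  · rw [franklin_of_slopeMovable h]
    exact ⟨_, _, Or.inr ⟨h.baseMovable_moveSlope, h.moveBase_moveSlope.symm⟩⟩

lemma franklin_franklin (h₀ : 0 ∉ s) (hp : ¬ IsPentagonal s) : franklin (franklin s) = s := by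
  obtain ⟨k, m, ⟨h, hf⟩ | ⟨h, hf⟩⟩ := exists_baseMovable_franklin h₀ hp
  · rw [hf, franklin_of_slopeMovable h.slopeMovable_moveBase, h.moveSlope_moveBase]
  · rw [franklin_of_baseMovable h, ← hf]

lemma zero_notMem_franklin (h₀ : 0 ∉ s) (hp : ¬ IsPentagonal s) : 0 ∉ franklin s := by
  obtain ⟨k, m, ⟨h, hf⟩ | ⟨h, -⟩⟩ := exists_baseMovable_franklin h₀ hp
  · exact hf ▸ h.slopeMovable_moveBase.zero_notMem
  · exact h.zero_notMem

lemma not_isPentagonal_franklin (h₀ : 0 ∉ s) (hp : ¬ IsPentagonal s) :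
    ¬ IsPentagonal (franklin s) := by
  obtain ⟨k, m, ⟨h, hf⟩ | ⟨h, -⟩⟩ := exists_baseMovable_franklin h₀ hp
  · exact hf ▸ h.slopeMovable_moveBase.not_isPentagonal
  · exact h.not_isPentagonal

lemma card_franklin_ne (h₀ : 0 ∉ s) (hp : ¬ IsPentagonal s) :
    (franklin s).card ≠ s.card := by
  obtain ⟨k, m, ⟨h, hf⟩ | ⟨h, hf⟩⟩ := exists_baseMovable_franklin h₀ hp <;>
  · have := h.card_moveBase; rw [← hf] at this; omega

lemma level_franklin (h₀ : 0 ∉ s) (hp : ¬ IsPentagonal s) : level (franklin s) = level s := by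
  obtain ⟨k, m, ⟨h, hf⟩ | ⟨h, hf⟩⟩ := exists_baseMovable_franklin h₀ hp
  · rw [hf, h.level_moveBase]
  · have := h.level_moveBase; rw [← hf] at this; exact this.symm

lemma signedWeight_franklin (h₀ : 0 ∉ s) (hp : ¬ IsPentagonal s) :
    signedWeight (franklin s) = -signedWeight s := by
  obtain ⟨k, m, ⟨h, hf⟩ | ⟨h, hf⟩⟩ := exists_baseMovable_franklin h₀ hp
  · rw [hf, h.signedWeight_moveBase]
  · have := h.signedWeight_moveBase; rw [← hf] at this; rw [this, neg_neg]

end Involution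

def partsOfLevel (a : ℕ) : Finset (Finset ℕ) :=
  (Icc 1 a).powerset.filter fun s => level s = a

lemma mem_partsOfLevel {a : ℕ} {s : Finset ℕ} :
    s ∈ partsOfLevel a ↔ 0 ∉ s ∧ level s = a := by
  rw [partsOfLevel, mem_filter, mem_powerset]
  refine ⟨fun ⟨hs, ha⟩ => ⟨fun h₀ => by simpa using hs h₀, ha⟩,
    fun ⟨h₀, ha⟩ => ⟨?_, ha⟩⟩
  intro x hx
  have : x ≤ s.sup id := le_sup (f := id) hx
  rw [mem_Icc, level] at *
  exact ⟨Nat.one_le_iff_ne_zero.2 fun hx₀ => h₀ (hx₀ ▸ hx), by omega⟩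

lemma sum_partsOfLevel_signedWeight (a : ℕ) :
    ∑ s ∈ partsOfLevel a, signedWeight s =
      ∑ s ∈ (partsOfLevel a).filter IsPentagonal, signedWeight s := by
  rw [← sum_filter_add_sum_filter_not _ IsPentagonal, add_eq_left]
  have hmem : ∀ {s}, s ∈ (partsOfLevel a).filter (¬ IsPentagonal ·) →
      0 ∉ s ∧ ¬ IsPentagonal s :=
    fun hs => ⟨(mem_partsOfLevel.1 (mem_filter.1 hs).1).1, (mem_filter.1 hs).2⟩
  refine sum_involution (fun s _ => franklin s) (fun s hs => ?_) (fun s hs _ => ?_)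
    (fun s hs => ?_) (fun s hs => franklin_franklin (hmem hs).1 (hmem hs).2)
  · rw [signedWeight_franklin (hmem hs).1 (hmem hs).2, add_neg_cancel]
  · exact fun he => card_franklin_ne (hmem hs).1 (hmem hs).2 (congrArg card he)
  · obtain ⟨h₀, hp⟩ := hmem hs
    rw [mem_filter, mem_partsOfLevel, level_franklin h₀ hp]
    exact ⟨⟨zero_notMem_franklin h₀ hp, (mem_partsOfLevel.1 (mem_filter.1 hs).1).2⟩,
      not_isPentagonal_franklin h₀ hp⟩

lemma level_Icc {a b : ℕ} (hab : a ≤ b) : level (Icc a b) = b + (b + 1 - a) := by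
  rw [level, isLUB_sup_id.unique (isGreatest_coe_Icc hab).isLUB, Nat.card_Icc]

lemma level_Icc_succ_two_mul_add_one (r : ℕ) : level (Icc (r + 1) (2 * r + 1)) = 3 * r + 2 := by
  rw [level_Icc (by omega)]; omega

lemma level_Icc_succ_two_mul (r : ℕ) : level (Icc (r + 1) (2 * r)) = 3 * r := by
  rcases r.eq_zero_or_pos with rfl | hr
  · rfl
  · rw [level_Icc (by omega)]; omega

lemma mem_filter_isPentagonal_partsOfLevel {a : ℕ} {s : Finset ℕ} :
    s ∈ (partsOfLevel a).filter IsPentagonal ↔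
      ∃ r, s = Icc (r + 1) (2 * r + 1) ∧ a = 3 * r + 2 ∨
        s = Icc (r + 1) (2 * r) ∧ a = 3 * r := by
  rw [mem_filter, mem_partsOfLevel]
  constructor
  · rintro ⟨⟨-, rfl⟩, r, rfl | rfl⟩
    exacts [⟨r, Or.inl ⟨rfl, level_Icc_succ_two_mul_add_one r⟩⟩,
      ⟨r, Or.inr ⟨rfl, level_Icc_succ_two_mul r⟩⟩]
  · rintro ⟨r, ⟨rfl, rfl⟩ | ⟨rfl, rfl⟩⟩
    exacts [⟨⟨by simp, level_Icc_succ_two_mul_add_one r⟩, r, Or.inl rfl⟩,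
      ⟨⟨by simp, level_Icc_succ_two_mul r⟩, r, Or.inr rfl⟩]

lemma filter_isPentagonal_partsOfLevel_three_mul (r : ℕ) :
    (partsOfLevel (3 * r)).filter IsPentagonal = {Icc (r + 1) (2 * r)} := by
  ext s
  rw [mem_filter_isPentagonal_partsOfLevel, mem_singleton]
  refine ⟨?_, fun hs => ⟨r, Or.inr ⟨hs, rfl⟩⟩⟩
  rintro ⟨r', ⟨-, h⟩ | ⟨rfl, h⟩⟩
  · omega
  · obtain rfl : r' = r := by omega
    rfl

lemma filter_isPentagonal_partsOfLevel_three_mul_add_one (r : ℕ) :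
    (partsOfLevel (3 * r + 1)).filter IsPentagonal = ∅ := by
  refine eq_empty_of_forall_notMem fun s hs => ?_
  obtain ⟨r', ⟨-, h⟩ | ⟨-, h⟩⟩ := mem_filter_isPentagonal_partsOfLevel.1 hs <;> omega

lemma filter_isPentagonal_partsOfLevel_three_mul_add_two (r : ℕ) :
    (partsOfLevel (3 * r + 2)).filter IsPentagonal = {Icc (r + 1) (2 * r + 1)} := by
  ext s
  rw [mem_filter_isPentagonal_partsOfLevel, mem_singleton]
  refine ⟨?_, fun hs => ⟨r, Or.inl ⟨hs, rfl⟩⟩⟩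
  rintro ⟨r', ⟨rfl, h⟩ | ⟨-, h⟩⟩
  · obtain rfl : r' = r := by omega
    rfl
  · omega

lemma sum_Icc_id_mul_two (r n : ℕ) : (Icc (r + 1) (r + n)).sum id * 2 = n * (2 * r + n + 1) := by
  induction n with
  | zero => simp
  | succ n ih =>
    rw [← add_assoc, sum_Icc_succ_top (by omega), add_mul, ih, id]
    ring

lemma signedWeight_Icc (r n : ℕ) :
    signedWeight (Icc (r + 1) (r + n)) = (-1) ^ n * X ^ (n * (2 * r + n + 1) / 2) := by
  have := sum_Icc_id_mul_two r n
  rw [signedWeight, Nat.card_Icc, show r + n + 1 - (r + 1) = n by omega,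
    show (Icc (r + 1) (r + n)).sum id = n * (2 * r + n + 1) / 2 by omega]

lemma signedWeight_Icc_succ_two_mul_add_one (r : ℕ) :
    signedWeight (Icc (r + 1) (2 * r + 1)) = (-1) ^ (r + 1) * X ^ ((r + 1) * (3 * r + 2) / 2) := by
  rw [show 2 * r + 1 = r + (r + 1) by omega, signedWeight_Icc]
  ring_nf

lemma signedWeight_Icc_succ_two_mul (r : ℕ) :
    signedWeight (Icc (r + 1) (2 * r)) = (-1) ^ r * X ^ (r * (3 * r + 1) / 2) := by
  rw [two_mul, signedWeight_Icc]
  ring_nf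

end Franklin

open Franklin

lemma coeff_signedPartitionSeries (a : ℕ) :
    coeff a signedPartitionSeries =
      ∑ s ∈ (partsOfLevel a).filter IsPentagonal, signedWeight s := by
  rw [signedPartitionSeries, coeff_mk]
  exact sum_partsOfLevel_signedWeight a

lemma coeff_pentagonalXqSeries_three_mul (r : ℕ) :
    coeff (3 * r) pentagonalXqSeries = (-1) ^ r * X ^ (r * (3 * r + 1) / 2) := by
  rw [pentagonalXqSeries, coeff_mk]
  rcases r.eq_zero_or_pos with rfl | hr
  · simp
  rw [if_neg (by omega), zero_add, sum_eq_single_of_mem r (by rw [mem_Icc]; omega)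
    fun r' _ hr' => by rw [if_neg (by omega), if_neg (by omega), add_zero, mul_zero],
    if_neg (by omega), if_pos rfl, zero_add]

lemma coeff_pentagonalXqSeries_three_mul_add_one (r : ℕ) :
    coeff (3 * r + 1) pentagonalXqSeries = 0 := by
  rw [pentagonalXqSeries, coeff_mk, if_neg (by omega), zero_add]
  exact sum_eq_zero fun r' _ => by rw [if_neg (by omega), if_neg (by omega), add_zero, mul_zero]

lemma coeff_pentagonalXqSeries_three_mul_add_two (r : ℕ) :
    coeff (3 * r + 2) pentagonalXqSeries = (-1) ^ (r + 1) * X ^ ((r + 1) * (3 * r + 2) / 2) := by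
  rw [pentagonalXqSeries, coeff_mk, if_neg (by omega), zero_add,
    sum_eq_single_of_mem (r + 1) (by rw [mem_Icc]; omega)
      fun r' _ hr' => by rw [if_neg (by omega), if_neg (by omega), add_zero, mul_zero],
    if_pos (by omega), if_neg (by omega), add_zero, show 3 * (r + 1) - 1 = 3 * r + 2 by omega]

/-- `Σ_{λ ∈ 𝒟} (-1)^{n_λ} x^{m_λ+n_λ} q^{N_λ}
= 1 + Σ_{r=1}^∞ (-1)^r [x^{3r-1} q^{r(3r-1)/2} + x^{3r} q^{r(3r+1)/2}]` in `ℤ⟦x,q⟧`. -/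
theorem signedPartitionSeries_eq_pentagonalXqSeries :
    signedPartitionSeries = pentagonalXqSeries := by
  ext a
  rw [coeff_signedPartitionSeries]
  obtain ⟨r, rfl | rfl | rfl⟩ : ∃ r, a = 3 * r ∨ a = 3 * r + 1 ∨ a = 3 * r + 2 :=
    ⟨a / 3, by omega⟩
  · rw [filter_isPentagonal_partsOfLevel_three_mul, sum_singleton,
      signedWeight_Icc_succ_two_mul, coeff_pentagonalXqSeries_three_mul]
  · rw [filter_isPentagonal_partsOfLevel_three_mul_add_one, sum_empty,
      coeff_pentagonalXqSeries_three_mul_add_one]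
  · rw [filter_isPentagonal_partsOfLevel_three_mul_add_two, sum_singleton,
      signedWeight_Icc_succ_two_mul_add_one, coeff_pentagonalXqSeries_three_mul_add_two]
end

section
/- For every N ≥ 1 that is not of the form r(3r−1)/2 or r(3r+1)/2 for a positive integer r, Σ_{λ ∈ 𝒟_N} (−1)^{n_λ} m_λ = −Σ_{λ ∈ 𝒟_N} (−1)^{n_λ} n_λ; that is, the signed sum of (m_λ + n_λ) over all partitions of N into distinct parts vanishes at non-pentagonal N. -/
/-!
Franklin's involution. Let a partition into distinct parts have smallest part `a`, largest
part `m`, and top run `t, t + 1, …, m` of length `k = m + 1 - t`. If `a ≤ k`, delete the part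
`a` and add one to each of the `a` largest parts; as sets this merges the parts `a` and
`m + 1 - a` into `m + 1`. Otherwise subtract one from each part of the top run and add a new
part `k`; this splits `m` into `k` and `t - 1`. The two moves undo each other, except on the
runs `[a, 2a)` and `(r, 2r]`, whose sums are the pentagonal numbers `(3a² - a)/2` and
`(3r² + r)/2`. Each move changes the number of parts and the largest part by one in opposite
directions, so it preserves `m_λ + n_λ` and reverses the sign `(-1)^{n_λ}`.
-/

open Finset

namespace Finset

variable {α : Type*} [DecidableEq α] [AddCommMonoid α] {s : Finset α} {x y : α}

def mergeParts (s : Finset α) (x y : α) : Finset α :=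
  insert (x + y) ((s.erase x).erase y)

def splitPart (s : Finset α) (x y : α) : Finset α :=
  insert x (insert y (s.erase (x + y)))

theorem mem_mergeParts {z : α} : z ∈ s.mergeParts x y ↔ z = x + y ∨ z ≠ y ∧ z ≠ x ∧ z ∈ s := by
  simp [mergeParts]

theorem mem_splitPart {z : α} : z ∈ s.splitPart x y ↔ z = x ∨ z = y ∨ z ≠ x + y ∧ z ∈ s := by
  simp [splitPart]

theorem sum_mergeParts (hx : x ∈ s) (hy : y ∈ s) (hxy : x ≠ y) (hs : x + y ∉ s) :
    ∑ i ∈ s.mergeParts x y, i = ∑ i ∈ s, i := by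
  rw [mergeParts, sum_insert fun h => hs (mem_of_mem_erase (mem_of_mem_erase h)),
    ← add_sum_erase s _ hx, ← add_sum_erase _ _ (mem_erase.2 ⟨hxy.symm, hy⟩), add_assoc]

theorem card_mergeParts (hx : x ∈ s) (hy : y ∈ s) (hxy : x ≠ y) (hs : x + y ∉ s) :
    #(s.mergeParts x y) + 1 = #s := by
  rw [mergeParts, card_insert_of_notMem fun h => hs (mem_of_mem_erase (mem_of_mem_erase h)),
    card_erase_add_one (mem_erase.2 ⟨hxy.symm, hy⟩), card_erase_add_one hx]

theorem splitPart_mergeParts (hx : x ∈ s) (hy : y ∈ s) (hxy : x ≠ y) (hs : x + y ∉ s) :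
    (s.mergeParts x y).splitPart x y = s := by
  rw [splitPart, mergeParts, erase_insert fun h => hs (mem_of_mem_erase (mem_of_mem_erase h)),
    insert_erase (mem_erase.2 ⟨hxy.symm, hy⟩), insert_erase hx]

theorem mergeParts_splitPart (hs : x + y ∈ s) (hx : x ∉ s) (hy : y ∉ s) (hxy : x ≠ y) :
    (s.splitPart x y).mergeParts x y = s := by
  have hy' : y ∉ s.erase (x + y) := fun h => hy (mem_of_mem_erase h)
  rw [mergeParts, splitPart, erase_insert (by simp [hxy, hx]), erase_insert hy', insert_erase hs]

end Finset

theorem two_mul_sum_Ico_two_mul (a : ℕ) : 2 * ∑ i ∈ Ico a (2 * a), i = 3 * a * a - a := by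
  have h := sum_range_id_mul_two a
  rw [sum_Ico_eq_sum_range, show 2 * a - a = a by omega, sum_add_distrib, sum_const, card_range,
    smul_eq_mul]
  apply Nat.eq_sub_of_add_eq
  rcases a with _ | a
  · simp
  · rw [Nat.add_sub_cancel] at h
    linarith

theorem two_mul_sum_Ioc_two_mul (r : ℕ) : 2 * ∑ i ∈ Ioc r (2 * r), i = 3 * r * r + r := by
  have h := sum_range_id_mul_two r
  rw [← Ico_add_one_add_one_eq_Ioc, sum_Ico_eq_sum_range, show 2 * r + 1 - (r + 1) = r by omega,
    sum_add_distrib, sum_const, card_range, smul_eq_mul]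
  rcases r with _ | r
  · simp
  · rw [Nat.add_sub_cancel] at h
    linarith

theorem mem_distinctPartitions {N : ℕ} {s : Finset ℕ} :
    s ∈ distinctPartitions N ↔ 0 ∉ s ∧ ∑ i ∈ s, i = N := by
  simp only [distinctPartitions, mem_filter, mem_powerset]
  refine ⟨fun ⟨hsub, hsum⟩ => ⟨fun h => by simpa using hsub h, hsum⟩, fun ⟨h0, hsum⟩ => ⟨?_, hsum⟩⟩
  intro x hx
  exact mem_Icc.2 ⟨Nat.pos_of_ne_zero (ne_of_mem_of_not_mem hx h0),
    hsum ▸ single_le_sum (f := fun i => i) (fun _ _ => Nat.zero_le _) hx⟩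

section Franklin

variable {s s' : Finset ℕ} {x y : ℕ}

noncomputable def smallestPart (s : Finset ℕ) : ℕ := sInf (s : Set ℕ)

noncomputable def topRunStart (s : Finset ℕ) : ℕ := sInf {x | Icc x (s.sup id) ⊆ s}

noncomputable def franklin (s : Finset ℕ) : Finset ℕ :=
  if smallestPart s + topRunStart s ≤ s.sup id + 1 then
    s.mergeParts (smallestPart s) (s.sup id + 1 - smallestPart s)
  else
    s.splitPart (s.sup id + 1 - topRunStart s) (topRunStart s - 1)

theorem smallestPart_mem (hs : s.Nonempty) : smallestPart s ∈ s :=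
  Nat.sInf_mem (coe_nonempty.2 hs)

theorem smallestPart_le (hx : x ∈ s) : smallestPart s ≤ x :=
  Nat.sInf_le hx

theorem smallestPart_eq (hx : x ∈ s) (h : ∀ y ∈ s, x ≤ y) : smallestPart s = x :=
  le_antisymm (smallestPart_le hx) (h _ (smallestPart_mem ⟨x, hx⟩))

theorem sup_id_mem (hs : s.Nonempty) : s.sup id ∈ s := by
  obtain ⟨x, hx, h⟩ := exists_mem_eq_sup s hs id
  rwa [h]

theorem le_sup_id (hx : x ∈ s) : x ≤ s.sup id :=
  le_sup (f := id) hx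

theorem sup_id_eq (hx : x ∈ s) (h : ∀ y ∈ s, y ≤ x) : s.sup id = x :=
  le_antisymm (Finset.sup_le h) (le_sup_id hx)

theorem Icc_topRunStart_subset : Icc (topRunStart s) (s.sup id) ⊆ s :=
  Nat.sInf_mem (s := {x | Icc x (s.sup id) ⊆ s}) ⟨s.sup id + 1, by simp⟩

theorem topRunStart_le (h : Icc x (s.sup id) ⊆ s) : topRunStart s ≤ x :=
  Nat.sInf_le h

theorem topRunStart_le_sup_id (hs : s.Nonempty) : topRunStart s ≤ s.sup id :=
  topRunStart_le (by simpa using sup_id_mem hs)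

theorem smallestPart_le_topRunStart (hs : s.Nonempty) : smallestPart s ≤ topRunStart s :=
  smallestPart_le (Icc_topRunStart_subset (left_mem_Icc.2 (topRunStart_le_sup_id hs)))

theorem topRunStart_eq (hrun : Icc x (s.sup id) ⊆ s) (hgap : x - 1 ∉ s) (hx : 0 < x)
    (hxm : x ≤ s.sup id + 1) : topRunStart s = x := by
  refine le_antisymm (topRunStart_le hrun) (not_lt.1 fun hlt => hgap ?_)
  exact Icc_topRunStart_subset (mem_Icc.2 ⟨by omega, by omega⟩)

theorem pred_topRunStart_notMem (h : 0 < topRunStart s) : topRunStart s - 1 ∉ s := by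
  intro hmem
  have hrun : Icc (topRunStart s - 1) (s.sup id) ⊆ s := fun y hy => by
    obtain rfl | hlt := (mem_Icc.1 hy).1.eq_or_lt
    · exact hmem
    · exact Icc_topRunStart_subset (mem_Icc.2 ⟨by omega, (mem_Icc.1 hy).2⟩)
  have := topRunStart_le hrun
  omega

structure FranklinRel (s s' : Finset ℕ) : Prop where
  sum_eq : ∑ i ∈ s', i = ∑ i ∈ s, i
  card_add_one : #s' + 1 = #s
  sup_id_eq : s'.sup id = s.sup id + 1

theorem FranklinRel.ne (h : FranklinRel s s') : s' ≠ s := by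
  rintro rfl
  have := h.card_add_one
  omega

theorem FranklinRel.signed_weight_eq (h : FranklinRel s s') :
    (-1 : ℤ) ^ #s' * ((s'.sup id : ℕ) + #s') = -((-1) ^ #s * ((s.sup id : ℕ) + #s)) := by
  rw [← h.card_add_one, h.sup_id_eq, pow_succ]
  push_cast
  ring

theorem sup_id_mergeParts (h : ∀ z ∈ s, z ≤ x + y) : (s.mergeParts x y).sup id = x + y :=
  sup_id_eq (by simp [mem_mergeParts]) fun z hz => by
    rcases mem_mergeParts.1 hz with rfl | ⟨-, -, hz⟩
    exacts [le_rfl, h z hz]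

theorem sup_id_splitPart (hx : 0 < x) (hxy : x < y) (hsup : s.sup id = x + y)
    (hrun : Icc (y + 1) (x + y) ⊆ s) : (s.splitPart x y).sup id = x + y - 1 := by
  refine sup_id_eq ?_ fun z hz => ?_
  · rw [mem_splitPart]
    by_cases hx1 : x = 1
    · exact .inr (.inl (by omega))
    · exact .inr (.inr ⟨by omega, hrun (mem_Icc.2 ⟨by omega, by omega⟩)⟩)
  · rcases mem_splitPart.1 hz with rfl | rfl | ⟨hne, hz⟩
    · omega
    · omega
    · have := le_sup_id hz
      omega

theorem franklinRel_mergeParts (hx : x ∈ s) (hy : y ∈ s) (hxy : x ≠ y)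
    (hsup : s.sup id + 1 = x + y) : FranklinRel s (s.mergeParts x y) := by
  have hmax : ∀ z ∈ s, z < x + y := fun z hz => by have := le_sup_id hz; omega
  have hs : x + y ∉ s := fun h => (hmax _ h).false
  exact ⟨sum_mergeParts hx hy hxy hs, card_mergeParts hx hy hxy hs,
    by rw [sup_id_mergeParts fun z hz => (hmax z hz).le, hsup]⟩

theorem franklin_mergeParts {a b : ℕ} (ha : a ∈ s) (hb : b ∈ s) (hab : a < b)
    (hmin : ∀ z ∈ s, a ≤ z) (hsup : s.sup id + 1 = a + b) (hrun : Icc b (s.sup id) ⊆ s) :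
    franklin (s.mergeParts a b) = s := by
  have hb_le := le_sup_id hb
  have hsup' : (s.mergeParts a b).sup id = a + b :=
    sup_id_mergeParts fun z hz => by have := le_sup_id hz; omega
  have hsmall' : a < smallestPart (s.mergeParts a b) := by
    have hmem := smallestPart_mem (s := s.mergeParts a b) ⟨a + b, mem_insert_self _ _⟩
    rcases mem_mergeParts.1 hmem with h | ⟨-, hne, h⟩
    · omega
    · exact (hmin _ h).lt_of_ne' hne
  have hrun' : topRunStart (s.mergeParts a b) = b + 1 := by
    refine topRunStart_eq (fun z hz => ?_) ?_ (by omega) (by omega)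
    · rw [hsup', mem_Icc] at hz
      rw [mem_mergeParts]
      by_cases hz' : z = a + b
      · exact .inl hz'
      · exact .inr ⟨by omega, by omega, hrun (mem_Icc.2 ⟨by omega, by omega⟩)⟩
    · rw [Nat.add_sub_cancel, mem_mergeParts]
      omega
  rw [franklin, if_neg (by omega), hsup', hrun', show a + b + 1 - (b + 1) = a by omega,
    Nat.add_sub_cancel, splitPart_mergeParts ha hb hab.ne fun h => by
      have := le_sup_id h; omega]

theorem franklin_splitPart (hx : 0 < x) (hxy : x < y) (hlow : ∀ z ∈ s, x < z)
    (hy : y ∉ s) (hsup : s.sup id = x + y) (hrun : Icc (y + 1) (x + y) ⊆ s) :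
    franklin (s.splitPart x y) = s := by
  have hsup' := sup_id_splitPart hx hxy hsup hrun
  have hsmall' : smallestPart (s.splitPart x y) = x := by
    refine smallestPart_eq (by simp [mem_splitPart]) fun z hz => ?_
    rcases mem_splitPart.1 hz with rfl | rfl | ⟨-, hz⟩
    exacts [le_rfl, hxy.le, (hlow z hz).le]
  have hrun' : topRunStart (s.splitPart x y) ≤ y := by
    refine topRunStart_le fun z hz => ?_
    rw [hsup', mem_Icc] at hz
    rw [mem_splitPart]
    by_cases hzy : z = y
    · exact .inr (.inl hzy)
    · exact .inr (.inr ⟨by omega, hrun (mem_Icc.2 ⟨by omega, by omega⟩)⟩)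
  rw [franklin, if_pos (by omega), hsup', hsmall', show x + y - 1 + 1 - x = y by omega,
    mergeParts_splitPart (hrun (mem_Icc.2 ⟨by omega, le_rfl⟩)) (fun h => (hlow x h).false) hy
      hxy.ne]

theorem franklin_spec_of_le (h0 : 0 ∉ s) (hs : s.Nonempty)
    (hc : smallestPart s + topRunStart s ≤ s.sup id + 1)
    (hlt : 2 * smallestPart s < s.sup id + 1) :
    franklin (franklin s) = s ∧ 0 ∉ franklin s ∧ FranklinRel s (franklin s) := by
  set a := smallestPart s
  set m := s.sup id
  set b := m + 1 - a
  have ha : a ∈ s := smallestPart_mem hs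
  have ha0 : a ≠ 0 := fun h => h0 (h ▸ ha)
  have hat := smallestPart_le_topRunStart hs
  have hrun : Icc b m ⊆ s := (Icc_subset_Icc_left (by omega)).trans Icc_topRunStart_subset
  have hb : b ∈ s := hrun (mem_Icc.2 ⟨le_rfl, by omega⟩)
  have hfr : franklin s = s.mergeParts a b := by rw [franklin, if_pos hc]
  rw [hfr]
  refine ⟨franklin_mergeParts ha hb (by omega) (fun _ => smallestPart_le) (by omega) hrun,
    fun h => ?_, franklinRel_mergeParts ha hb (by omega) (by omega)⟩
  rcases mem_mergeParts.1 h with h | ⟨-, -, h⟩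
  exacts [absurd h (by omega), h0 h]

theorem franklin_spec_of_lt (h0 : 0 ∉ s) (hs : s.Nonempty)
    (hc : s.sup id + 1 < smallestPart s + topRunStart s)
    (hlt : s.sup id + 3 ≤ 2 * topRunStart s) :
    franklin (franklin s) = s ∧ 0 ∉ franklin s ∧ FranklinRel (franklin s) s := by
  set m := s.sup id
  set t := topRunStart s
  set x := m + 1 - t
  set y := t - 1
  have htm : t ≤ m := topRunStart_le_sup_id hs
  have hsup : m = x + y := by omega
  have hrun : Icc (y + 1) (x + y) ⊆ s := by
    rw [show y + 1 = t by omega, ← hsup]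
    exact Icc_topRunStart_subset
  have hlow : ∀ z ∈ s, x < z := fun z hz => by have := smallestPart_le hz; omega
  have hy : y ∉ s := pred_topRunStart_notMem (by omega)
  have hfr : franklin s = s.splitPart x y := by rw [franklin, if_neg (by omega)]
  have hrel := franklinRel_mergeParts (s := s.splitPart x y) (x := x) (y := y)
    (by simp [mem_splitPart]) (by simp [mem_splitPart]) (by omega)
    (by rw [sup_id_splitPart (by omega) (by omega) hsup hrun]; omega)
  rw [mergeParts_splitPart (hsup ▸ sup_id_mem hs) (fun h => (hlow x h).false) hy (by omega)]
    at hrel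
  rw [hfr]
  refine ⟨franklin_splitPart (by omega) (by omega) hlow hy hsup hrun, fun h => ?_, hrel⟩
  rcases mem_splitPart.1 h with h | h | ⟨-, h⟩
  exacts [absurd h (by omega), absurd h (by omega), h0 h]

theorem eq_Icc_topRunStart (h : topRunStart s ≤ smallestPart s) :
    s = Icc (topRunStart s) (s.sup id) :=
  Subset.antisymm (fun _ hy => mem_Icc.2 ⟨h.trans (smallestPart_le hy), le_sup_id hy⟩)
    Icc_topRunStart_subset

theorem eq_Ico_smallestPart (hs : s.Nonempty)
    (hc : smallestPart s + topRunStart s ≤ s.sup id + 1)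
    (hge : s.sup id + 1 ≤ 2 * smallestPart s) :
    s = Ico (smallestPart s) (2 * smallestPart s) := by
  have := smallestPart_le_topRunStart hs
  calc s = Icc (topRunStart s) (s.sup id) := eq_Icc_topRunStart (by omega)
    _ = _ := by ext; simp only [mem_Icc, mem_Ico]; omega

theorem eq_Ioc_pred_topRunStart (hs : s.Nonempty)
    (hc : s.sup id + 1 < smallestPart s + topRunStart s)
    (hle : 2 * topRunStart s ≤ s.sup id + 2) :
    s = Ioc (topRunStart s - 1) (2 * (topRunStart s - 1)) := by
  have := smallestPart_le_topRunStart hs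
  calc s = Icc (topRunStart s) (s.sup id) := eq_Icc_topRunStart (by omega)
    _ = _ := by ext; simp only [mem_Icc, mem_Ioc]; omega

theorem franklin_spec (h0 : 0 ∉ s) (hs : s.Nonempty) (hIco : ∀ a, s ≠ Ico a (2 * a))
    (hIoc : ∀ r, s ≠ Ioc r (2 * r)) :
    franklin (franklin s) = s ∧ 0 ∉ franklin s ∧
      (FranklinRel s (franklin s) ∨ FranklinRel (franklin s) s) := by
  by_cases hc : smallestPart s + topRunStart s ≤ s.sup id + 1
  · obtain ⟨hinv, h0', hrel⟩ :=
      franklin_spec_of_le h0 hs hc (not_le.1 fun h => hIco _ (eq_Ico_smallestPart hs hc h))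
    exact ⟨hinv, h0', .inl hrel⟩
  · rw [not_le] at hc
    obtain ⟨hinv, h0', hrel⟩ := franklin_spec_of_lt h0 hs hc
      (not_lt.1 fun h => hIoc _ (eq_Ioc_pred_topRunStart hs hc (by omega)))
    exact ⟨hinv, h0', .inr hrel⟩

theorem franklin_spec_of_mem_distinctPartitions {N : ℕ} (hN : 1 ≤ N)
    (h : ∀ r : ℕ, 0 < r → ¬(2 * N = 3 * r * r - r ∨ 2 * N = 3 * r * r + r))
    (hs : s ∈ distinctPartitions N) :
    franklin (franklin s) = s ∧ franklin s ∈ distinctPartitions N ∧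
      (FranklinRel s (franklin s) ∨ FranklinRel (franklin s) s) := by
  obtain ⟨h0, hsum⟩ := mem_distinctPartitions.1 hs
  have hne : s.Nonempty := nonempty_of_sum_ne_zero (f := fun i => i) (by omega)
  have hpent (r : ℕ) (hr : 2 * N = 3 * r * r - r ∨ 2 * N = 3 * r * r + r) : False :=
    h r (Nat.pos_of_ne_zero (by rintro rfl; simp at hr; omega)) hr
  obtain ⟨hinv, h0', hrel⟩ := franklin_spec h0 hne
    (fun a ha => hpent a (.inl (by rw [← hsum, ha, two_mul_sum_Ico_two_mul])))
    (fun r hr => hpent r (.inr (by rw [← hsum, hr, two_mul_sum_Ioc_two_mul])))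
  refine ⟨hinv, mem_distinctPartitions.2 ⟨h0', ?_⟩, hrel⟩
  rcases hrel with hr | hr
  exacts [hr.sum_eq.trans hsum, hr.sum_eq.symm.trans hsum]

end Franklin

/-- For every `N ≥ 1` not of the form `r(3r-1)/2` or `r(3r+1)/2` (i.e. `2N = 3r² - r`
or `2N = 3r² + r`) for a positive integer `r`,
`Σ_{λ ∈ 𝒟_N} (-1)^{n_λ} m_λ = -Σ_{λ ∈ 𝒟_N} (-1)^{n_λ} n_λ`, where `n_λ = s.card` is
the number of parts and `m_λ = s.sup id` is the largest part; that is, the signed sum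
of `m_λ + n_λ` vanishes at non-pentagonal `N`. -/
theorem signed_sum_largest_part_eq_neg_signed_sum_card (N : ℕ) (hN : 1 ≤ N)
    (h : ∀ r : ℕ, 0 < r → ¬(2 * N = 3 * r * r - r ∨ 2 * N = 3 * r * r + r)) :
    ∑ s ∈ distinctPartitions N, (-1 : ℤ) ^ s.card * ((s.sup (id : ℕ → ℕ) : ℕ) : ℤ)
      = -∑ s ∈ distinctPartitions N, (-1 : ℤ) ^ s.card * (s.card : ℤ) := by
  have hfr := fun s (hs : s ∈ distinctPartitions N) =>
    franklin_spec_of_mem_distinctPartitions hN h hs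
  rw [eq_neg_iff_add_eq_zero, ← sum_add_distrib]
  refine sum_involution (fun s _ => franklin s) (fun s hs => ?_) (fun s hs _ => ?_)
    (fun s hs => (hfr s hs).2.1) (fun s hs => (hfr s hs).1)
  · rcases (hfr s hs).2.2 with hr | hr
    · linear_combination hr.signed_weight_eq
    · linear_combination hr.signed_weight_eq
  · rcases (hfr s hs).2.2 with hr | hr
    exacts [hr.ne, hr.ne.symm]
end
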